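/- Let σ = co{x₀, …, xₙ} ⊂ ℝⁿ be an n-simplex, and let f : U → ℝⁿ, g : U → ℝ^{n×m} (with columns g₁, …, g_m), and h : U → ℝᵖ be twice continuously differentiable on an open set U containing σ. Let β ≥ max over p,q,r ∈ {1,…,n} and ξ ∈ σ of |∂²f⁽ᵖ⁾/∂x⁽q⁾∂x⁽r⁾(ξ)|; for a ∈ {1,…,p} let ρ_a ≥ max over q,r and ξ ∈ σ of |∂²h⁽ᵃ⁾/∂x⁽q⁾∂x⁽r⁾(ξ)|; for k ∈ {1,…,m} let μ_k ≥ max over p,q,r and ξ ∈ σ of |∂²g_k⁽ᵖ⁾/∂x⁽q⁾∂x⁽r⁾(ξ)|. Let v ∈ ℝⁿ, l ≥ ‖v‖₁, α > 0, and c_j = n · max_{υ ∈ {0,…,n}} ‖x_j − x_υ‖₂². Suppose that for every vertex x_j, j = 0, …, n, the symmetric (1+m+p+m)×(1+m+p+m) block matrix M_j = [[vᵀf(x_j) + (1/2)(β c_j l + Σ_{a=1}^{p} ρ_a² c_j²), vᵀg(x_j), h(x_j)ᵀ, l c_j (μ₁, …, μ_m)], [g(x_j)ᵀv, −2αI_m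 + (1/2)I_m, 0, 0], [h(x_j), 0, −(3/2)I_p, 0], [l c_j (μ₁, …, μ_m)ᵀ, 0, 0, −2I_m]] is negative semidefinite. Then for every x ∈ σ the gain LMI [[vᵀf(x), vᵀg(x), h(x)ᵀ], [g(x)ᵀv, −2αI_m, 0], [h(x), 0, −2I_p]] is negative semidefinite. -/

import Mathlib

open Matrix

/-- Euclidean norm on `ℝⁿ` (represented as `Fin n → ℝ`). -/
noncomputable def enorm2 {n : ℕ} (x : Fin n → ℝ) : ℝ := Real.sqrt (∑ i, x i ^ 2)

/-- Second partial derivative `∂²f/∂x⁽q⁾∂x⁽r⁾` of `f : ℝⁿ → ℝ` at `ξ`. -/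
noncomputable def pd2 {n : ℕ} (f : (Fin n → ℝ) → ℝ) (q r : Fin n) (ξ : Fin n → ℝ) : ℝ :=
  fderiv ℝ (fun y => fderiv ℝ f y (Pi.single q 1)) ξ (Pi.single r 1)

/-- A real matrix is negative semidefinite iff its negation is positive semidefinite. -/
def Matrix.NegSemidef {ι : Type*} [Fintype ι] (M : Matrix ι ι ℝ) : Prop :=
  (-M).PosSemidef

/-!
Write `y ∈ σ` as a convex combination `∑ wⱼ xⱼ`. For every `C²` component `φ` of `f`, `g`, `h`,
`φ y = ∑ wⱼ (φ xⱼ - Rⱼ)`, where `Rⱼ` is the first-order Taylor remainder of `φ` at `y` in the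
direction `xⱼ - y` (the linear terms cancel because `∑ wⱼ (xⱼ - y) = 0`), and Taylor's theorem
bounds `|Rⱼ|` by half the bound on the second partials times `‖xⱼ - y‖₁² ≤ cⱼ`. Hence the gain LMI
at `y` is a convex combination of gain LMIs at the vertices with perturbed data, and each of
these is dominated by the augmented vertex matrix `M_j`, whose extra entries absorb the
perturbations.
-/

open Set

theorem exists_mul_eq_abs_mul_abs_and_sq_eq (t c : ℝ) : ∃ y, t * y = |t| * |c| ∧ y ^ 2 = c ^ 2 := by
  rcases le_or_gt 0 t with ht | ht
  · exact ⟨|c|, by rw [abs_of_nonneg ht], sq_abs c⟩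
  · exact ⟨-|c|, by rw [abs_of_neg ht]; ring, by rw [neg_sq, sq_abs]⟩

theorem neg_two_mul_mul_mul_le_of_abs_le {δ s : ℝ} (t z : ℝ) (hδ : |δ| ≤ s / 2) :
    -(2 * t * (δ * z)) ≤ s * (|t| * |z|) := by
  have : |2 * t * (δ * z)| ≤ s * (|t| * |z|) := by
    rw [abs_mul, abs_mul, abs_mul, abs_two]
    nlinarith [mul_nonneg (abs_nonneg t) (abs_nonneg z)]
  exact (neg_le_abs _).trans this

namespace Matrix

theorem negSemidef_iff_dotProduct_mulVec_nonpos {ι : Type*} [Fintype ι] {M : Matrix ι ι ℝ} :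
    M.NegSemidef ↔ M.IsHermitian ∧ ∀ z, z ⬝ᵥ (M *ᵥ z) ≤ 0 := by
  simp only [NegSemidef, posSemidef_iff_dotProduct_mulVec, isHermitian_neg_iff, star_trivial,
    neg_mulVec, dotProduct_neg, neg_nonneg]

section Arrowhead

variable {ι : Type*} [DecidableEq ι]

def arrowhead (A : ℝ) (u δ : ι → ℝ) : Matrix (Fin 1 ⊕ ι) (Fin 1 ⊕ ι) ℝ :=
  fromBlocks (of fun _ _ => A) (of fun _ i => u i) (of fun i _ => u i) (diagonal δ)

theorem isHermitian_arrowhead (A : ℝ) (u δ : ι → ℝ) : (arrowhead A u δ).IsHermitian :=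
  .fromBlocks (by ext; rfl) (by ext; rfl) (isHermitian_diagonal δ)

variable [Fintype ι]

theorem dotProduct_arrowhead_mulVec (A t : ℝ) (u δ z : ι → ℝ) :
    Sum.elim (fun _ => t) z ⬝ᵥ (arrowhead A u δ *ᵥ Sum.elim (fun _ => t) z)
      = A * t ^ 2 + 2 * t * ∑ i, u i * z i + ∑ i, δ i * z i ^ 2 := by
  simp only [arrowhead, fromBlocks_mulVec, sumElim_dotProduct_sumElim, dotProduct_add]
  simp only [dotProduct, Finset.univ_unique, Fin.default_eq_zero, Fin.isValue, mulVec, of_apply,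
    Function.comp_apply, Sum.elim_inl, Finset.sum_const, Finset.card_singleton, one_smul,
    Sum.elim_inr, diagonal_apply, ite_mul, zero_mul, Finset.sum_ite_eq, Finset.mem_univ, ↓reduceIte]
  have hcross (i : ι) : 2 * t * (u i * z i) = t * (u i * z i) + z i * (u i * t) := by ring
  have hdiag (i : ι) : δ i * z i ^ 2 = z i * (δ i * z i) := by ring
  simp only [Finset.mul_sum, hcross, hdiag, Finset.sum_add_distrib]
  ring

theorem arrowhead_negSemidef_iff {A : ℝ} {u δ : ι → ℝ} :
    (arrowhead A u δ).NegSemidef ↔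
      ∀ (t : ℝ) (z : ι → ℝ), A * t ^ 2 + 2 * t * ∑ i, u i * z i + ∑ i, δ i * z i ^ 2 ≤ 0 := by
  rw [negSemidef_iff_dotProduct_mulVec_nonpos]
  refine ⟨fun h t z => dotProduct_arrowhead_mulVec A t u δ z ▸ h.2 _,
    fun h => ⟨isHermitian_arrowhead A u δ, fun z => ?_⟩⟩
  have hz : z = Sum.elim (fun _ => z (Sum.inl 0)) (z ∘ Sum.inr) := by
    ext (i | i)
    · rw [Subsingleton.elim i 0]; rfl
    · rfl
  rw [hz, dotProduct_arrowhead_mulVec]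
  exact h _ _

theorem arrowhead_negSemidef_of_eq_sum_mul {κ : Type*} [Fintype κ] {w : κ → ℝ}
    (hw₀ : ∀ j, 0 ≤ w j) (hw₁ : ∑ j, w j = 1) {A : ℝ} {u δ : ι → ℝ} {B : κ → ℝ}
    {U : κ → ι → ℝ} (hA : A = ∑ j, w j * B j) (hu : ∀ i, u i = ∑ j, w j * U j i)
    (hBU : ∀ j, (arrowhead (B j) (U j) δ).NegSemidef) : (arrowhead A u δ).NegSemidef := by
  simp only [arrowhead_negSemidef_iff] at hBU ⊢
  intro t z
  have hcomb : A * t ^ 2 + 2 * t * ∑ i, u i * z i + ∑ i, δ i * z i ^ 2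
      = ∑ j, w j * (B j * t ^ 2 + 2 * t * ∑ i, U j i * z i + ∑ i, δ i * z i ^ 2) := by
    have hB : A * t ^ 2 = ∑ j, w j * (B j * t ^ 2) := by
      rw [hA, Finset.sum_mul]
      exact Finset.sum_congr rfl fun _ _ => mul_assoc _ _ _
    have hU : 2 * t * ∑ i, u i * z i = ∑ j, w j * (2 * t * ∑ i, U j i * z i) := by
      simp only [hu, Finset.sum_mul, Finset.mul_sum]
      rw [Finset.sum_comm]
      exact Finset.sum_congr rfl fun _ _ => Finset.sum_congr rfl fun _ _ => by ring
    have hD : ∑ i, δ i * z i ^ 2 = ∑ j, w j * ∑ i, δ i * z i ^ 2 := by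
      rw [← Finset.sum_mul, hw₁, one_mul]
    conv_lhs => rw [hB, hU, hD, ← Finset.sum_add_distrib, ← Finset.sum_add_distrib]
    simp only [mul_add]
  rw [hcomb]
  exact Finset.sum_nonpos fun j _ => mul_nonpos_of_nonneg_of_nonpos (hw₀ j) (hBU j t z)

end Arrowhead

theorem arrowhead_negSemidef_sub_of_augmented {κ ν : Type*} [Fintype κ] [DecidableEq κ]
    [Fintype ν] [DecidableEq ν] {A e ε d : ℝ} {u δu s : κ → ℝ} {w δw r : ν → ℝ}
    (he : |e| ≤ ε / 2) (hu : ∀ k, |δu k| ≤ s k / 2) (hw : ∀ a, |δw a| ≤ r a / 2)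
    (hM : (arrowhead (A + 1 / 2 * (ε + ∑ a, r a ^ 2)) (Sum.elim u (Sum.elim w s))
      (Sum.elim (fun _ => d + 1 / 2) (Sum.elim (fun _ => -(3 / 2)) fun _ => -2))).NegSemidef) :
    (arrowhead (A - e) (Sum.elim (u - δu) (w - δw))
      (Sum.elim (fun _ => d) fun _ => -2)).NegSemidef := by
  rw [arrowhead_negSemidef_iff] at hM ⊢
  intro t z
  -- Testing `hM` with the extra coordinates `y k / 2` turns the border entries `s k` into
  -- `s k * |t| * |z k|`, enough to absorb `δu k`, while `1 / 2 * z k ^ 2 = 2 * (y k / 2) ^ 2`.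
  choose y hty hy2 using fun k => exists_mul_eq_abs_mul_abs_and_sq_eq t (z (Sum.inl k))
  have hM' := hM t (Sum.elim (z ∘ Sum.inl) (Sum.elim (z ∘ Sum.inr) (y · / 2)))
  simp only [Fintype.sum_sum_type, Sum.elim_inl, Sum.elim_inr, Function.comp_apply,
    Pi.sub_apply] at hM' ⊢
  have hk (k : κ) : 2 * t * ((u k - δu k) * z (Sum.inl k)) + d * z (Sum.inl k) ^ 2
      ≤ 2 * t * (u k * z (Sum.inl k)) + 2 * t * (s k * (y k / 2))
        + ((d + 1 / 2) * z (Sum.inl k) ^ 2 + -2 * (y k / 2) ^ 2) := by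
    linarith [neg_two_mul_mul_mul_le_of_abs_le t (z (Sum.inl k)) (hu k),
      congrArg (s k * ·) (hty k), hy2 k]
  have ha (a : ν) : 2 * t * ((w a - δw a) * z (Sum.inr a)) + -2 * z (Sum.inr a) ^ 2
      ≤ 1 / 2 * r a ^ 2 * t ^ 2 + 2 * t * (w a * z (Sum.inr a)) + -(3 / 2) * z (Sum.inr a) ^ 2 := by
    nlinarith [neg_two_mul_mul_mul_le_of_abs_le t (z (Sum.inr a)) (hw a),
      two_mul_le_add_sq (r a * |t|) |z (Sum.inr a)|, sq_abs t, sq_abs (z (Sum.inr a))]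
  have hK := Finset.sum_le_sum fun k (_ : k ∈ Finset.univ) => hk k
  have hA := Finset.sum_le_sum fun a (_ : a ∈ Finset.univ) => ha a
  simp only [Finset.sum_add_distrib, ← Finset.mul_sum, ← Finset.sum_mul] at hK hA hM' ⊢
  nlinarith [neg_abs_le e, sq_nonneg t]

end Matrix

theorem abs_sub_sub_deriv_le_of_abs_deriv2_le {ψ ψ' ψ'' : ℝ → ℝ} {K : ℝ}
    (hψ : ∀ t ∈ Icc (0 : ℝ) 1, HasDerivAt ψ (ψ' t) t)
    (hψ' : ∀ t ∈ Icc (0 : ℝ) 1, HasDerivAt ψ' (ψ'' t) t)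
    (hK : ∀ t ∈ Icc (0 : ℝ) 1, |ψ'' t| ≤ K) : |ψ 1 - ψ 0 - ψ' 0| ≤ K / 2 := by
  have hψ'_sub : ∀ t ∈ Icc (0 : ℝ) 1, |ψ' t - ψ' 0| ≤ K * t := by
    simpa using norm_image_sub_le_of_norm_deriv_le_segment'
      (fun t ht => (hψ' t ht).hasDerivWithinAt) fun t ht => hK t (Ico_subset_Icc_self ht)
  have hrem : ∀ t ∈ Icc (0 : ℝ) 1, HasDerivAt (fun s => ψ s - ψ 0 - s * ψ' 0) (ψ' t - ψ' 0) t :=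
    fun t ht => by
      simpa using ((hψ t ht).sub_const (ψ 0)).fun_sub ((hasDerivAt_id' t).mul_const (ψ' 0))
  simpa using image_norm_le_of_norm_deriv_right_le_deriv_boundary
    (f := fun s => ψ s - ψ 0 - s * ψ' 0) (B := fun s => K / 2 * s ^ 2) (B' := fun s => K * s)
    (HasDerivAt.continuousOn hrem) (fun t ht => (hrem t (Ico_subset_Icc_self ht)).hasDerivWithinAt)
    (by simp) (fun t => ((hasDerivAt_pow 2 t).const_mul (K / 2)).congr_deriv (by push_cast; ring))
    (fun t ht => hψ'_sub t (Ico_subset_Icc_self ht)) (right_mem_Icc.2 zero_le_one)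

theorem abs_sum_mul_le_sum_abs_mul {ι : Type*} [Fintype ι] {d R : ι → ℝ} {C : ℝ}
    (hR : ∀ i, |R i| ≤ C) : |∑ i, d i * R i| ≤ (∑ i, |d i|) * C :=
  calc |∑ i, d i * R i| ≤ ∑ i, |d i| * |R i| := by
        simpa only [abs_mul] using Finset.abs_sum_le_sum_abs (fun i => d i * R i) Finset.univ
    _ ≤ ∑ i, |d i| * C :=
        Finset.sum_le_sum fun i _ => mul_le_mul_of_nonneg_left (hR i) (abs_nonneg _)
    _ = (∑ i, |d i|) * C := (Finset.sum_mul _ _ _).symm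

theorem ContinuousLinearMap.apply_eq_sum_mul_single {ι : Type*} [Fintype ι] [DecidableEq ι]
    (L : (ι → ℝ) →L[ℝ] ℝ) (d : ι → ℝ) : L d = ∑ i, d i * L (Pi.single i 1) := by
  conv_lhs => rw [pi_eq_sum_univ' d]
  simp [map_sum]

noncomputable def firstOrderRemainder {E : Type*} [NormedAddCommGroup E] [NormedSpace ℝ E]
    (φ : E → ℝ) (a b : E) : ℝ :=
  φ b - φ a - fderiv ℝ φ a (b - a)

theorem abs_firstOrderRemainder_le {n : ℕ} {U : Set (Fin n → ℝ)} (hU : IsOpen U)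
    {φ : (Fin n → ℝ) → ℝ} (hφ : ContDiffOn ℝ 2 φ U) {a b : Fin n → ℝ} (hab : segment ℝ a b ⊆ U)
    {B : ℝ} (hB : ∀ q r, ∀ ξ ∈ segment ℝ a b, |pd2 φ q r ξ| ≤ B) :
    |firstOrderRemainder φ a b| ≤ B / 2 * (∑ q, |b q - a q|) ^ 2 := by
  set γ : ℝ → (Fin n → ℝ) := fun t => a + t • (b - a)
  have hγ (t : ℝ) : HasDerivAt γ (b - a) t := by
    simpa only [id, one_smul] using ((hasDerivAt_id t).smul_const (b - a)).const_add a
  have hγseg : ∀ t ∈ Icc (0 : ℝ) 1, γ t ∈ segment ℝ a b := fun t ht => by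
    rw [segment_eq_image']; exact ⟨t, ht, rfl⟩
  have hφ1 : ContDiffOn ℝ 1 (fderiv ℝ φ) U := hφ.fderiv_of_isOpen hU (by norm_num)
  have hdiff : ∀ z ∈ U, DifferentiableAt ℝ φ z := fun z hz =>
    (hφ.differentiableOn (by norm_num)).differentiableAt (hU.mem_nhds hz)
  have hdiff' (q : Fin n) : ∀ z ∈ U, DifferentiableAt ℝ (fun y => fderiv ℝ φ y (Pi.single q 1)) z :=
    fun z hz => ((hφ1.clm_apply contDiffOn_const).differentiableOn (by norm_num)).differentiableAt
      (hU.mem_nhds hz)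
  have hψ : ∀ t ∈ Icc (0 : ℝ) 1, HasDerivAt (φ ∘ γ) (fderiv ℝ φ (γ t) (b - a)) t := fun t ht =>
    (hdiff _ (hab (hγseg t ht))).hasFDerivAt.comp_hasDerivAt t (hγ t)
  have hψ' : ∀ t ∈ Icc (0 : ℝ) 1, HasDerivAt (fun s => fderiv ℝ φ (γ s) (b - a))
      (∑ q, (b - a) q * ∑ r, (b - a) r * pd2 φ q r (γ t)) t := by
    intro t ht
    simp only [fun s => (fderiv ℝ φ (γ s)).apply_eq_sum_mul_single (b - a)]
    refine HasDerivAt.fun_sum fun q _ => HasDerivAt.const_mul _ ?_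
    simpa only [pd2, Function.comp_def, ← ContinuousLinearMap.apply_eq_sum_mul_single] using
      (hdiff' q _ (hab (hγseg t ht))).hasFDerivAt.comp_hasDerivAt t (hγ t)
  have hψ'' : ∀ t ∈ Icc (0 : ℝ) 1,
      |∑ q, (b - a) q * ∑ r, (b - a) r * pd2 φ q r (γ t)| ≤ B * (∑ q, |(b - a) q|) ^ 2 :=
    fun t ht => by
      have := abs_sum_mul_le_sum_abs_mul (d := b - a) fun q =>
        abs_sum_mul_le_sum_abs_mul (d := b - a) fun r => hB q r _ (hγseg t ht)
      linarith
  have := abs_sub_sub_deriv_le_of_abs_deriv2_le hψ hψ' hψ''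
  simp only [Function.comp_apply, γ, zero_smul, add_zero, one_smul, add_sub_cancel,
    Pi.sub_apply] at this
  rw [firstOrderRemainder]
  linarith

theorem exists_weights_of_mem_convexHull_range {ι E : Type*} [Fintype ι] [AddCommGroup E]
    [Module ℝ E] {x : ι → E} {y : E} (hy : y ∈ convexHull ℝ (range x)) :
    ∃ w : ι → ℝ, (∀ j, 0 ≤ w j) ∧ ∑ j, w j = 1 ∧ ∑ j, w j • x j = y := by
  classical
  rw [convexHull_range_eq_exists_affineCombination] at hy
  obtain ⟨s, w, hw₀, hw₁, rfl⟩ := hy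
  refine ⟨fun j => if j ∈ s then w j else 0, fun j => ?_, ?_, ?_⟩
  · dsimp only
    split_ifs with hj
    exacts [hw₀ j hj, le_rfl]
  · rwa [Finset.sum_ite_mem, Finset.univ_inter]
  · simp only [ite_smul, zero_smul, Finset.sum_ite_mem, Finset.univ_inter]
    exact (s.affineCombination_eq_linear_combination x w hw₁).symm

theorem enorm2_sq {n : ℕ} (u : Fin n → ℝ) : enorm2 u ^ 2 = ∑ i, u i ^ 2 :=
  Real.sq_sqrt (Finset.sum_nonneg fun i _ => sq_nonneg (u i))

theorem sq_sum_abs_sub_le_of_mem_convexHull {n : ℕ} {ι : Type*} [Fintype ι]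
    {x : ι → Fin n → ℝ} {y : Fin n → ℝ} (hy : y ∈ convexHull ℝ (range x)) (j : ι) :
    (∑ q, |x j q - y q|) ^ 2 ≤ n * ⨆ υ, enorm2 (x j - x υ) ^ 2 := by
  obtain ⟨w, hw₀, hw₁, rfl⟩ := exists_weights_of_mem_convexHull_range hy
  have hjensen (q : Fin n) :
      (x j q - (∑ υ, w υ • x υ) q) ^ 2 ≤ ∑ υ, w υ * (x j q - x υ q) ^ 2 := by
    have hcomb : x j q - (∑ υ, w υ • x υ) q = ∑ υ, w υ • (x j q - x υ q) := by
      simp only [Finset.sum_apply, Pi.smul_apply, smul_eq_mul, mul_sub, Finset.sum_sub_distrib,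
        ← Finset.sum_mul, hw₁, one_mul]
    rw [hcomb]
    exact (even_two.convexOn_pow).map_sum_le (fun υ _ => hw₀ υ) hw₁ fun _ _ => mem_univ _
  calc (∑ q, |x j q - (∑ υ, w υ • x υ) q|) ^ 2
      ≤ n * ∑ q, (x j q - (∑ υ, w υ • x υ) q) ^ 2 := by
        simpa only [sq_abs, Finset.card_univ, Fintype.card_fin] using
          sq_sum_le_card_mul_sum_sq (s := Finset.univ) (f := fun q => |x j q - (∑ υ, w υ • x υ) q|)
    _ ≤ n * ∑ q, ∑ υ, w υ * (x j q - x υ q) ^ 2 := by gcongr with q; exact hjensen q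
    _ = n * ∑ υ, w υ * enorm2 (x j - x υ) ^ 2 := by
        rw [Finset.sum_comm]
        simp only [enorm2_sq, Pi.sub_apply, Finset.mul_sum]
    _ ≤ n * ∑ υ, w υ * ⨆ υ', enorm2 (x j - x υ') ^ 2 := by
        gcongr (n : ℝ) * ?_
        exact Finset.sum_le_sum fun υ _ => mul_le_mul_of_nonneg_left
          (le_ciSup (f := fun υ' => enorm2 (x j - x υ') ^ 2) (finite_range _).bddAbove υ) (hw₀ υ)
    _ = n * ⨆ υ, enorm2 (x j - x υ) ^ 2 := by rw [← Finset.sum_mul, hw₁, one_mul]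

theorem eq_sum_mul_sub_firstOrderRemainder {E ι : Type*} [NormedAddCommGroup E]
    [NormedSpace ℝ E] [Fintype ι] (φ : E → ℝ) {w : ι → ℝ} {x : ι → E} {y : E}
    (hw₁ : ∑ j, w j = 1) (hwy : ∑ j, w j • x j = y) :
    φ y = ∑ j, w j * (φ (x j) - firstOrderRemainder φ y (x j)) := by
  have hbalance : ∑ j, w j • (x j - y) = 0 := by
    rw [Finset.sum_congr rfl fun j _ => smul_sub (w j) (x j) y, Finset.sum_sub_distrib, hwy,
      ← Finset.sum_smul, hw₁, one_smul, sub_self]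
  have hlin : ∑ j, w j * fderiv ℝ φ y (x j - y) = 0 := by
    simpa [map_sum] using congrArg (fderiv ℝ φ y) hbalance
  have hvertex (j : ι) :
      φ (x j) - firstOrderRemainder φ y (x j) = φ y + fderiv ℝ φ y (x j - y) := by
    rw [firstOrderRemainder]; ring
  simp only [hvertex, mul_add, Finset.sum_add_distrib, ← Finset.sum_mul, hw₁, one_mul, hlin,
    add_zero]

theorem dotProduct_eq_sum_mul_sub_firstOrderRemainder {E ι κ : Type*} [NormedAddCommGroup E]
    [NormedSpace ℝ E] [Fintype ι] [Fintype κ] (Φ : E → κ → ℝ) (v : κ → ℝ) {w : ι → ℝ}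
    {x : ι → E} {y : E} (hw₁ : ∑ j, w j = 1) (hwy : ∑ j, w j • x j = y) :
    v ⬝ᵥ Φ y = ∑ j, w j * (v ⬝ᵥ Φ (x j) - ∑ q, v q * firstOrderRemainder (Φ · q) y (x j)) := by
  simp only [dotProduct]
  conv_lhs => enter [2, q]; rw [eq_sum_mul_sub_firstOrderRemainder (Φ · q) hw₁ hwy]
  simp only [Finset.mul_sum, ← Finset.sum_sub_distrib]
  rw [Finset.sum_comm]
  exact Finset.sum_congr rfl fun _ _ => Finset.sum_congr rfl fun _ _ => by ring

theorem abs_firstOrderRemainder_le_of_mem_convexHull {n : ℕ} {ι : Type*} [Fintype ι]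
    {x : ι → Fin n → ℝ} {U : Set (Fin n → ℝ)} (hU : IsOpen U) (hσU : convexHull ℝ (range x) ⊆ U)
    {φ : (Fin n → ℝ) → ℝ} (hφ : ContDiffOn ℝ 2 φ U) {B : ℝ} (hB₀ : 0 ≤ B)
    (hB : ∀ q r, ∀ ξ ∈ convexHull ℝ (range x), |pd2 φ q r ξ| ≤ B) {y : Fin n → ℝ}
    (hy : y ∈ convexHull ℝ (range x)) (j : ι) :
    |firstOrderRemainder φ y (x j)| ≤ B / 2 * (n * ⨆ υ, enorm2 (x j - x υ) ^ 2) := by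
  have hseg : segment ℝ y (x j) ⊆ convexHull ℝ (range x) :=
    (convex_convexHull ℝ _).segment_subset hy (subset_convexHull ℝ _ ⟨j, rfl⟩)
  calc |firstOrderRemainder φ y (x j)| ≤ B / 2 * (∑ q, |x j q - y q|) ^ 2 :=
        abs_firstOrderRemainder_le hU hφ (hseg.trans hσU) fun q r ξ hξ => hB q r ξ (hseg hξ)
    _ ≤ B / 2 * (n * ⨆ υ, enorm2 (x j - x υ) ^ 2) := by
        gcongr
        exact sq_sum_abs_sub_le_of_mem_convexHull hy j

theorem vertex_gain_lmi_implies_gain_lmi_on_simplex_general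
    {n m p : ℕ} (hn : 0 < n)
    (x : Fin (n + 1) → (Fin n → ℝ))
    (U : Set (Fin n → ℝ)) (hU : IsOpen U)
    (hσU : convexHull ℝ (Set.range x) ⊆ U)
    (f : (Fin n → ℝ) → (Fin n → ℝ)) (hf : ContDiffOn ℝ 2 f U)
    (g : (Fin n → ℝ) → Matrix (Fin n) (Fin m) ℝ)
    (hg : ∀ k : Fin m, ContDiffOn ℝ 2 (fun z i => g z i k) U)
    (h : (Fin n → ℝ) → (Fin p → ℝ)) (hh : ContDiffOn ℝ 2 h U)
    (β : ℝ)
    (hβ : ∀ (q r s : Fin n), ∀ ξ ∈ convexHull ℝ (Set.range x),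
      |pd2 (fun z => f z q) r s ξ| ≤ β)
    (ρ : Fin p → ℝ)
    (hρ : ∀ (a : Fin p) (q r : Fin n), ∀ ξ ∈ convexHull ℝ (Set.range x),
      |pd2 (fun z => h z a) q r ξ| ≤ ρ a)
    (μ : Fin m → ℝ)
    (hμ : ∀ (k : Fin m) (q r s : Fin n), ∀ ξ ∈ convexHull ℝ (Set.range x),
      |pd2 (fun z => g z q k) r s ξ| ≤ μ k)
    (v : Fin n → ℝ) (l : ℝ) (hl : ∑ i, |v i| ≤ l)
    (α : ℝ)
    (c : Fin (n + 1) → ℝ)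
    (hc : ∀ j, c j = n * (⨆ υ : Fin (n + 1), enorm2 (x j - x υ) ^ 2))
    (hvertex : ∀ j : Fin (n + 1),
      (Matrix.fromBlocks
        (Matrix.of fun (_ : Fin 1) (_ : Fin 1) =>
          v ⬝ᵥ f (x j) + (1 / 2) * (β * c j * l + ∑ a, ρ a ^ 2 * c j ^ 2))
        (Matrix.of fun (_ : Fin 1) q =>
          Sum.elim (v ᵥ* g (x j)) (Sum.elim (h (x j)) (fun k => l * c j * μ k)) q)
        (Matrix.of fun q (_ : Fin 1) =>
          Sum.elim (v ᵥ* g (x j)) (Sum.elim (h (x j)) (fun k => l * c j * μ k)) q)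
        (Matrix.fromBlocks ((-(2 * α) + 1 / 2 : ℝ) • 1) 0 0
          (Matrix.fromBlocks ((-(3 / 2) : ℝ) • 1) 0 0 ((-2 : ℝ) • 1)))).NegSemidef) :
    ∀ y ∈ convexHull ℝ (Set.range x),
      (Matrix.fromBlocks
        (Matrix.of fun (_ : Fin 1) (_ : Fin 1) => v ⬝ᵥ f y)
        (Matrix.of fun (_ : Fin 1) q => Sum.elim (v ᵥ* g y) (h y) q)
        (Matrix.of fun q (_ : Fin 1) => Sum.elim (v ᵥ* g y) (h y) q)
        (Matrix.fromBlocks ((-(2 * α) : ℝ) • 1) 0 0 ((-2 : ℝ) • 1))).NegSemidef := by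
  intro y hy
  obtain ⟨w, hw₀, hw₁, hwy⟩ := exists_weights_of_mem_convexHull_range hy
  have q₀ : Fin n := ⟨0, hn⟩
  have hrem {φ : (Fin n → ℝ) → ℝ} {B : ℝ} (hφ : ContDiffOn ℝ 2 φ U)
      (hB : ∀ q r, ∀ ξ ∈ convexHull ℝ (Set.range x), |pd2 φ q r ξ| ≤ B) (j : Fin (n + 1)) :
      |firstOrderRemainder φ y (x j)| ≤ B / 2 * c j := by
    rw [hc j]
    exact abs_firstOrderRemainder_le_of_mem_convexHull hU hσU hφ
      ((abs_nonneg _).trans (hB q₀ q₀ y hy)) hB hy j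
  have hvrem {Φ : (Fin n → ℝ) → Fin n → ℝ} {B : ℝ} (hΦ : ∀ q, ContDiffOn ℝ 2 (Φ · q) U)
      (hB : ∀ q r s, ∀ ξ ∈ convexHull ℝ (Set.range x), |pd2 (Φ · q) r s ξ| ≤ B) (j : Fin (n + 1)) :
      |∑ q, v q * firstOrderRemainder (Φ · q) y (x j)| ≤ l * c j * B / 2 := by
    have hR (q : Fin n) := hrem (hΦ q) (hB q) j
    calc _ ≤ (∑ q, |v q|) * (B / 2 * c j) := abs_sum_mul_le_sum_abs_mul hR
      _ ≤ l * (B / 2 * c j) := mul_le_mul_of_nonneg_right hl ((abs_nonneg _).trans (hR q₀))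
      _ = l * c j * B / 2 := by ring
  simp only [smul_one_eq_diagonal, fromBlocks_diagonal] at hvertex ⊢
  refine arrowhead_negSemidef_of_eq_sum_mul hw₀ hw₁
    (B := fun j => v ⬝ᵥ f (x j) - ∑ q, v q * firstOrderRemainder (f · q) y (x j))
    (U := fun j => Sum.elim
      (v ᵥ* g (x j) - fun k => ∑ q, v q * firstOrderRemainder (g · q k) y (x j))
      (h (x j) - fun a => firstOrderRemainder (h · a) y (x j)))
    (dotProduct_eq_sum_mul_sub_firstOrderRemainder f v hw₁ hwy) ?_ fun j => ?_
  · rintro (k | a)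
    · exact dotProduct_eq_sum_mul_sub_firstOrderRemainder (fun z i => g z i k) v hw₁ hwy
    · exact eq_sum_mul_sub_firstOrderRemainder (h · a) hw₁ hwy
  have hM := hvertex j
  simp only [← mul_pow] at hM
  refine arrowhead_negSemidef_sub_of_augmented (r := fun a => ρ a * c j) ?_ (fun k => ?_)
    (fun a => ?_) hM
  · exact (hvrem (fun q => contDiffOn_pi.mp hf q) hβ j).trans_eq (by ring)
  · exact hvrem (fun q => contDiffOn_pi.mp (hg k) q) (hμ k) j
  · exact (hrem (contDiffOn_pi.mp hh a) (hρ a) j).trans_eq (by ring)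

/-- (Vertex LMI constraints certify the gain LMI on a simplex;
the core of Theorem 3 of the paper.) If the augmented block matrices `M_j` are negative
semidefinite at every vertex `x_j` of the simplex `σ = co{x₀,…,xₙ}`, then the gain LMI
`[[vᵀf(x), vᵀg(x), h(x)ᵀ], [g(x)ᵀv, −2αI_m, 0], [h(x), 0, −2I_p]]` is negative
semidefinite at every `x ∈ σ`. Here `v` is the constant gradient of the CPA storage
function on `σ`, `l ≥ ‖v‖₁`, and `α = γ²`. -/
theorem vertex_gain_lmi_implies_gain_lmi_on_simplex
    {n m p : ℕ} (hn : 0 < n)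
    (x : Fin (n + 1) → (Fin n → ℝ)) (hx : AffineIndependent ℝ x)
    (U : Set (Fin n → ℝ)) (hU : IsOpen U)
    (hσU : convexHull ℝ (Set.range x) ⊆ U)
    (f : (Fin n → ℝ) → (Fin n → ℝ)) (hf : ContDiffOn ℝ 2 f U)
    (g : (Fin n → ℝ) → Matrix (Fin n) (Fin m) ℝ)
    (hg : ∀ k : Fin m, ContDiffOn ℝ 2 (fun z i => g z i k) U)
    (h : (Fin n → ℝ) → (Fin p → ℝ)) (hh : ContDiffOn ℝ 2 h U)
    (β : ℝ)
    (hβ : ∀ (q r s : Fin n), ∀ ξ ∈ convexHull ℝ (Set.range x),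
      |pd2 (fun z => f z q) r s ξ| ≤ β)
    (ρ : Fin p → ℝ)
    (hρ : ∀ (a : Fin p) (q r : Fin n), ∀ ξ ∈ convexHull ℝ (Set.range x),
      |pd2 (fun z => h z a) q r ξ| ≤ ρ a)
    (μ : Fin m → ℝ)
    (hμ : ∀ (k : Fin m) (q r s : Fin n), ∀ ξ ∈ convexHull ℝ (Set.range x),
      |pd2 (fun z => g z q k) r s ξ| ≤ μ k)
    (v : Fin n → ℝ) (l : ℝ) (hl : ∑ i, |v i| ≤ l)
    (α : ℝ) (hα : 0 < α)
    (c : Fin (n + 1) → ℝ)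
    (hc : ∀ j, c j = n * (⨆ υ : Fin (n + 1), enorm2 (x j - x υ) ^ 2))
    (hvertex : ∀ j : Fin (n + 1),
      (Matrix.fromBlocks
        (Matrix.of fun (_ : Fin 1) (_ : Fin 1) =>
          v ⬝ᵥ f (x j) + (1 / 2) * (β * c j * l + ∑ a, ρ a ^ 2 * c j ^ 2))
        (Matrix.of fun (_ : Fin 1) q =>
          Sum.elim (v ᵥ* g (x j)) (Sum.elim (h (x j)) (fun k => l * c j * μ k)) q)
        (Matrix.of fun q (_ : Fin 1) =>
          Sum.elim (v ᵥ* g (x j)) (Sum.elim (h (x j)) (fun k => l * c j * μ k)) q)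
        (Matrix.fromBlocks ((-(2 * α) + 1 / 2 : ℝ) • 1) 0 0
          (Matrix.fromBlocks ((-(3 / 2) : ℝ) • 1) 0 0 ((-2 : ℝ) • 1)))).NegSemidef) :
    ∀ y ∈ convexHull ℝ (Set.range x),
      (Matrix.fromBlocks
        (Matrix.of fun (_ : Fin 1) (_ : Fin 1) => v ⬝ᵥ f y)
        (Matrix.of fun (_ : Fin 1) q => Sum.elim (v ᵥ* g y) (h y) q)
        (Matrix.of fun q (_ : Fin 1) => Sum.elim (v ᵥ* g y) (h y) q)
        (Matrix.fromBlocks ((-(2 * α) : ℝ) • 1) 0 0 ((-2 : ℝ) • 1))).NegSemidef :=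
  vertex_gain_lmi_implies_gain_lmi_on_simplex_general hn x U hU hσU f hf g hg h hh β hβ ρ hρ μ hμ v
    l hl α c hc hvertex
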